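/- Let A, B be sets and let f : List A → List B be a 1-historical function. Define C : List A → List (A × B) by C([]) = [] and, for ℓ of length ≥ 1, C(ℓ) = zip ℓ (f (map fst (C(∂ℓ)))). Then the function ℓ ↦ f(map fst (C(ℓ))) equals f; that is, the identity wiring diagram acts as the identity on 1-historical propagators: P(id)(f) = f. -/

import Mathlib

/-- A function `f : List R → List S` is *n-historical* if it sends lists of length `t`
to lists of length `t + n`, and it commutes with the operation `∂ = List.dropLast`
of dropping the last entry of a nonempty list. -/
def Historical {R S : Type*} (n : ℕ) (f : List R → List S) : Prop :=
  (∀ ℓ : List R, (f ℓ).length = ℓ.length + n) ∧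
    ∀ ℓ : List R, 1 ≤ ℓ.length → (f ℓ).dropLast = f ℓ.dropLast

/-- The cascade of a function `f : List A → List B`: `C([]) = []` and for nonempty `ℓ`,
`C(ℓ) = zip ℓ (f (map fst (C(∂ℓ))))`. -/
def cascade {A B : Type*} (f : List A → List B) : List A → List (A × B)
  | [] => []
  | a :: as => List.zip (a :: as) (f (List.map Prod.fst (cascade f (a :: as).dropLast)))
termination_by ℓ => ℓ.length
decreasing_by simp [List.length_dropLast]

theorem Historical.length_lt_length {R S : Type*} {n : ℕ} {f : List R → List S}
    (hf : Historical (n + 1) f) (ℓ : List R) : ℓ.length < (f ℓ).length := by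
  rw [hf.1]
  omega

/-- Each entry `ℓᵢ` is zipped with an output of `f` that exists because `f` lengthens lists. -/
theorem map_fst_cascade {A B : Type*} (f : List A → List B)
    (hf : ∀ ℓ : List A, ℓ.length < (f ℓ).length) (ℓ : List A) :
    (cascade f ℓ).map Prod.fst = ℓ := by
  induction ℓ using cascade.induct with
  | case1 => simp [cascade]
  | case2 a as ih =>
    rw [cascade, ih]
    refine List.map_fst_zip ?_
    simpa using hf (a :: as).dropLast

/-- The identity wiring diagram acts as the identity on 1-historical propagators:
if `f` is 1-historical, then `P(id)(f) = ℓ ↦ f (map fst (C(ℓ)))` equals `f`. -/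
theorem identity_wiring_diagram_acts_trivially {A B : Type*}
    (f : List A → List B) (hf : Historical 1 f) :
    (fun ℓ : List A => f (List.map Prod.fst (cascade f ℓ))) = f := by
  funext ℓ
  rw [map_fst_cascade f hf.length_lt_length ℓ]
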